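/- THEOREM (warm-up, 1/3-OCRS for matching with edge arrival): let c = 1/3. If p satisfies the c-fixed-point condition at every edge preceding e in the arrival order, then P(F_e) ≥ 1/3. Consequently, there exists p : E → [0,1] satisfying the (1/3)-fixed-point condition at every edge, so that the greedy process outputs a matching in which every edge e is included with probability exactly x_e/3. -/

import Mathlib

open Finset

/-- `touches e v` says that vertex `v` is an endpoint of the edge `e`. -/
def touches {V : Type*} (e : V × V) (v : V) : Prop :=
  e.1 = v ∨ e.2 = v

open Classical in
/-- The greedy matching process on edges `ends 0, ends 1, …, ends (m-1)` (arriving in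
this order) with activation pattern `ω`: `greedyUpTo ends ω k` is the set of (indices of)
edges matched after the first `k` edges have been processed.  An arriving edge is matched
iff it is active and both of its endpoints are currently unmatched. -/
noncomputable def greedyUpTo {V : Type*} {m : ℕ} (ends : Fin m → V × V)
    (ω : Fin m → Bool) : ℕ → Finset (Fin m)
  | 0 => ∅
  | k + 1 =>
    if h : k < m then
      if ω ⟨k, h⟩ = true ∧
          (∀ j ∈ greedyUpTo ends ω k,
            ¬ touches (ends j) (ends ⟨k, h⟩).1 ∧ ¬ touches (ends j) (ends ⟨k, h⟩).2)
      then insert ⟨k, h⟩ (greedyUpTo ends ω k) else greedyUpTo ends ω k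
    else greedyUpTo ends ω k

open Classical in
/-- Probability of the event `P` under the (finitely supported) mass function `mass`. -/
noncomputable def prOf {Ω : Type*} [Fintype Ω] (mass : Ω → ℝ) (P : Ω → Prop) : ℝ :=
  ∑ ω, if P ω then mass ω else 0

/-- Product Bernoulli mass on activation patterns: coordinate `i` is `true` with
probability `p i`, independently across edges. -/
noncomputable def massP {m : ℕ} (p : Fin m → ℝ) (ω : Fin m → Bool) : ℝ :=
  ∏ i, if ω i then p i else 1 - p i

/-- The event `F_e`: both endpoints of edge `i` are unmatched just before `i` is
processed by the greedy process. -/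
def freeAt {V : Type*} {m : ℕ} (ends : Fin m → V × V) (ω : Fin m → Bool) (i : Fin m) :
    Prop :=
  ∀ j ∈ greedyUpTo ends ω i.1,
    ¬ touches (ends j) (ends i).1 ∧ ¬ touches (ends j) (ends i).2

/-- The event that edge `i` ends up matched by the greedy process. -/
def matchedEdge {V : Type*} {m : ℕ} (ends : Fin m → V × V) (ω : Fin m → Bool)
    (i : Fin m) : Prop :=
  i ∈ greedyUpTo ends ω m

/-- The `c`-fixed-point condition at edge `i`:
`p i * P(F_i) = c * x i`, i.e. the greedy process matches edge `i` with probability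
exactly `c * x i`. -/
def fixedPt {V : Type*} {m : ℕ} (ends : Fin m → V × V) (x p : Fin m → ℝ) (c : ℝ)
    (i : Fin m) : Prop :=
  p i * prOf (massP p) (fun ω => freeAt ends ω i) = c * x i

/-!
An edge `j` can block `e` only if it is matched before `e` arrives and shares an endpoint with
`e`. If the fixed-point condition holds at the edges preceding `e`, each such `j` is matched
with probability `x j / 3`, so by the union bound and the fractional matching constraints at the
two endpoints of `e`, the event `F_e` fails with probability at most `2/3`.

The event `F_e` depends only on the activations of the edges preceding `e`, and the activation
of `e` is independent of it. Hence `p` can be fixed edge by edge in the arrival order, setting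
`p e = (x e / 3) / P(F_e) ≤ x e ≤ 1`; this choice does not affect `P(F_j)` for `j ≤ e`.
-/

section Greedy

variable {V : Type*} {m : ℕ}

lemma not_touches_comm {e f : V × V} :
    (¬touches e f.1 ∧ ¬touches e f.2) ↔ (¬touches f e.1 ∧ ¬touches f e.2) := by
  grind [touches]

variable (ends : Fin m → V × V)

lemma mem_greedyUpTo_succ (ω : Fin m → Bool) {j : Fin m} {k : ℕ} :
    j ∈ greedyUpTo ends ω (k + 1) ↔
      j ∈ greedyUpTo ends ω k ∨ (j.1 = k ∧ ω j = true ∧ freeAt ends ω j) := by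
  rw [greedyUpTo]
  split_ifs with hk hfree
  · rw [mem_insert]
    grind [freeAt]
  · grind [freeAt]
  · grind

lemma lt_of_mem_greedyUpTo {ω : Fin m → Bool} {j : Fin m} {k : ℕ}
    (h : j ∈ greedyUpTo ends ω k) : j.1 < k := by
  induction k with
  | zero => simp [greedyUpTo] at h
  | succ k ih =>
    rcases (mem_greedyUpTo_succ ends ω).1 h with h | ⟨h, -⟩
    · exact (ih h).trans k.lt_succ_self
    · omega

lemma mem_greedyUpTo_iff (ω : Fin m → Bool) {j : Fin m} {k : ℕ} (hjk : j.1 < k) :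
    j ∈ greedyUpTo ends ω k ↔ ω j = true ∧ freeAt ends ω j := by
  induction k, hjk using Nat.le_induction with
  | base =>
    rw [mem_greedyUpTo_succ, or_iff_right fun h => (lt_of_mem_greedyUpTo ends h).false]
    simp
  | succ k hk ih =>
    rw [mem_greedyUpTo_succ, ih]
    grind

lemma greedyUpTo_pairwise (ω : Fin m → Bool) (k : ℕ) :
    (greedyUpTo ends ω k : Set (Fin m)).Pairwise
      fun i j => ¬touches (ends j) (ends i).1 ∧ ¬touches (ends j) (ends i).2 := by
  induction k with
  | zero => simp [greedyUpTo]
  | succ k ih =>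
    rw [greedyUpTo]
    split_ifs with _ hfree
    · rw [coe_insert]
      exact ih.insert fun j hj _ => ⟨hfree.2 j hj, not_touches_comm.1 (hfree.2 j hj)⟩
    · exact ih
    · exact ih

lemma greedyUpTo_congr {ω ω' : Fin m → Bool} {k : ℕ} (h : ∀ j : Fin m, j.1 < k → ω j = ω' j) :
    greedyUpTo ends ω k = greedyUpTo ends ω' k := by
  induction k with
  | zero => rfl
  | succ k ih =>
    rw [greedyUpTo, greedyUpTo, ih fun j hj => h j (by omega)]
    split_ifs <;> grind

lemma freeAt_update_of_le (ω : Fin m → Bool) {i j : Fin m} (hji : j ≤ i) (b : Bool) :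
    freeAt ends (Function.update ω i b) j ↔ freeAt ends ω j := by
  unfold freeAt
  rw [greedyUpTo_congr ends fun l hl => Function.update_of_ne (by omega) _ _]

end Greedy

section Probability

lemma prOf_add_prOf_not {Ω : Type*} [Fintype Ω] (mass : Ω → ℝ) (P : Ω → Prop) :
    prOf mass P + prOf mass (fun ω => ¬P ω) = ∑ ω, mass ω := by
  unfold prOf
  rw [← sum_add_distrib]
  exact sum_congr rfl fun ω _ => by by_cases h : P ω <;> simp [h]

lemma prOf_le_sum_prOf {Ω ι : Type*} [Fintype Ω] {mass : Ω → ℝ} (hmass : ∀ ω, 0 ≤ mass ω)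
    {P : Ω → Prop} {Q : ι → Ω → Prop} (T : Finset ι) (hPQ : ∀ ω, P ω → ∃ j ∈ T, Q j ω) :
    prOf mass P ≤ ∑ j ∈ T, prOf mass (Q j) := by
  classical
  unfold prOf
  rw [sum_comm]
  refine sum_le_sum fun ω _ => ?_
  have hterm : ∀ j, 0 ≤ if Q j ω then mass ω else 0 := fun j => ite_nonneg (hmass ω) le_rfl
  split_ifs with hP
  · obtain ⟨j, hj, hQ⟩ := hPQ ω hP
    calc mass ω = if Q j ω then mass ω else 0 := (if_pos hQ).symm
      _ ≤ _ := single_le_sum (fun j _ => hterm j) hj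
  · exact sum_nonneg fun j _ => hterm j

lemma Fintype.sum_eq_sum_funSplitAt {ι β M : Type*} [Fintype ι] [DecidableEq ι] [Fintype β]
    [AddCommMonoid M] (i : ι) (F : (ι → β) → M) :
    ∑ ω, F ω = ∑ g : {j // j ≠ i} → β, ∑ b, F ((Equiv.funSplitAt i β).symm (b, g)) := by
  rw [← (Equiv.funSplitAt i β).symm.sum_comp, Fintype.sum_prod_type, sum_comm]

lemma Equiv.funSplitAt_symm_eq_update {ι β : Type*} [DecidableEq ι] (i : ι) (b b' : β)
    (g : {j // j ≠ i} → β) :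
    (Equiv.funSplitAt i β).symm (b, g) =
      Function.update ((Equiv.funSplitAt i β).symm (b', g)) i b := by
  ext j
  by_cases h : j = i
  · subst h; simp
  · simp [h]

variable {m : ℕ} (p : Fin m → ℝ)

lemma massP_nonneg {p : Fin m → ℝ} (hp : ∀ i, 0 ≤ p i ∧ p i ≤ 1) (ω : Fin m → Bool) :
    0 ≤ massP p ω :=
  prod_nonneg fun i _ => by split_ifs <;> linarith [hp i]

lemma sum_massP : ∑ ω, massP p ω = 1 := by
  unfold massP
  rw [← Fintype.prod_sum fun i (b : Bool) => if b then p i else 1 - p i]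
  simp

lemma massP_funSplitAt_symm (i : Fin m) (b : Bool) (g : {j // j ≠ i} → Bool) :
    massP p ((Equiv.funSplitAt i Bool).symm (b, g)) =
      (if b then p i else 1 - p i) * ∏ j : {j // j ≠ i}, if g j then p j else 1 - p j := by
  rw [massP, Fintype.prod_eq_mul_prod_subtype_ne _ i]
  congr 1
  · simp
  · exact prod_congr rfl fun j _ => by simp [j.2]

variable {i : Fin m} {Q : (Fin m → Bool) → Prop}

open Classical in
lemma prOf_massP_eq_of_indep (hQ : ∀ ω b, Q (Function.update ω i b) ↔ Q ω) :
    prOf (massP p) Q = ∑ g : {j // j ≠ i} → Bool,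
      if Q ((Equiv.funSplitAt i Bool).symm (true, g)) then
        ∏ j : {j // j ≠ i}, (if g j then p j else 1 - p j) else 0 := by
  unfold prOf
  rw [Fintype.sum_eq_sum_funSplitAt i]
  refine sum_congr rfl fun g _ => ?_
  have hfalse : Q ((Equiv.funSplitAt i Bool).symm (false, g)) ↔
      Q ((Equiv.funSplitAt i Bool).symm (true, g)) := by
    rw [Equiv.funSplitAt_symm_eq_update i false true, hQ]
  rw [Fintype.sum_bool, massP_funSplitAt_symm, massP_funSplitAt_symm]
  simp only [hfalse, Bool.false_eq_true, ↓reduceIte]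
  split_ifs <;> ring

lemma prOf_massP_true_and_of_indep (hQ : ∀ ω b, Q (Function.update ω i b) ↔ Q ω) :
    prOf (massP p) (fun ω => ω i = true ∧ Q ω) = p i * prOf (massP p) Q := by
  rw [prOf_massP_eq_of_indep p hQ, mul_sum]
  unfold prOf
  rw [Fintype.sum_eq_sum_funSplitAt i]
  refine sum_congr rfl fun g _ => ?_
  split_ifs <;> simp_all [massP_funSplitAt_symm]

lemma prOf_massP_update_of_indep (c : ℝ) (hQ : ∀ ω b, Q (Function.update ω i b) ↔ Q ω) :
    prOf (massP (Function.update p i c)) Q = prOf (massP p) Q := by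
  have hrest (g : {j // j ≠ i} → Bool) :
      ∏ j : {j // j ≠ i}, (if g j then Function.update p i c j else 1 - Function.update p i c j) =
        ∏ j : {j // j ≠ i}, (if g j then p j else 1 - p j) :=
    prod_congr rfl fun j _ => by rw [Function.update_of_ne j.2]
  simp only [prOf_massP_eq_of_indep _ hQ, hrest]

end Probability

section OCRS

open Classical

variable {V : Type*} {m : ℕ} (ends : Fin m → V × V) (x : Fin m → ℝ)

lemma prOf_mem_greedyUpTo (p : Fin m → ℝ) {j : Fin m} {k : ℕ} (hjk : j.1 < k) :
    prOf (massP p) (fun ω => j ∈ greedyUpTo ends ω k) =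
      p j * prOf (massP p) (fun ω => freeAt ends ω j) := by
  simp only [mem_greedyUpTo_iff ends _ hjk]
  exact prOf_massP_true_and_of_indep p fun ω b => freeAt_update_of_le ends ω le_rfl b

lemma one_third_le_prOf_freeAt (hx0 : ∀ i, 0 ≤ x i)
    (hxv : ∀ v : V, ∑ i ∈ univ.filter (fun i => touches (ends i) v), x i ≤ 1)
    {p : Fin m → ℝ} (hp : ∀ i, 0 ≤ p i ∧ p i ≤ 1) (e : Fin m)
    (hfix : ∀ j < e, fixedPt ends x p (1 / 3) j) :
    1 / 3 ≤ prOf (massP p) (fun ω => freeAt ends ω e) := by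
  set T : V → Finset (Fin m) := fun v => univ.filter fun j => touches (ends j) v
  have hmatched (j : Fin m) : prOf (massP p) (fun ω => j ∈ greedyUpTo ends ω e) ≤ x j / 3 := by
    by_cases hje : j < e
    · have hj := hfix j hje
      unfold fixedPt at hj
      rw [prOf_mem_greedyUpTo ends p hje, hj]
      linarith
    · have hzero : prOf (massP p) (fun ω => j ∈ greedyUpTo ends ω e) = 0 :=
        sum_eq_zero fun ω _ => if_neg fun h => hje (lt_of_mem_greedyUpTo ends h)
      linarith [hx0 j]
  have hblocked (ω : Fin m → Bool) (h : ¬freeAt ends ω e) :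
      ∃ j ∈ T (ends e).1 ∪ T (ends e).2, j ∈ greedyUpTo ends ω e := by
    simp only [freeAt, not_forall, not_and_or, not_not] at h
    obtain ⟨j, hj, ht⟩ := h
    exact ⟨j, by simpa [T] using ht, hj⟩
  have hvertex (v : V) : ∑ j ∈ T v, x j / 3 ≤ 1 / 3 := by
    rw [← sum_div]
    linarith [hxv v]
  have hblocked_le : prOf (massP p) (fun ω => ¬freeAt ends ω e) ≤ 2 / 3 :=
    calc prOf (massP p) (fun ω => ¬freeAt ends ω e)
        ≤ ∑ j ∈ T (ends e).1 ∪ T (ends e).2, prOf (massP p) (fun ω => j ∈ greedyUpTo ends ω e) :=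
          prOf_le_sum_prOf (massP_nonneg hp) _ hblocked
      _ ≤ ∑ j ∈ T (ends e).1 ∪ T (ends e).2, x j / 3 := sum_le_sum fun j _ => hmatched j
      _ ≤ ∑ j ∈ T (ends e).1, x j / 3 + ∑ j ∈ T (ends e).2, x j / 3 := by
          rw [← sum_union_inter]
          exact le_add_of_nonneg_right (sum_nonneg fun j _ => by linarith [hx0 j])
      _ ≤ 2 / 3 := by linarith [hvertex (ends e).1, hvertex (ends e).2]
  have hcompl := prOf_add_prOf_not (massP p) (fun ω => freeAt ends ω e)
  rw [sum_massP] at hcompl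
  linarith

lemma exists_fixedPt_third_of_lt (hx0 : ∀ i, 0 ≤ x i)
    (hxv : ∀ v : V, ∑ i ∈ univ.filter (fun i => touches (ends i) v), x i ≤ 1) (n : ℕ) :
    ∃ p : Fin m → ℝ, (∀ i, 0 ≤ p i ∧ p i ≤ 1) ∧
      ∀ i : Fin m, i.1 < n → fixedPt ends x p (1 / 3) i := by
  induction n with
  | zero => exact ⟨0, fun _ => by simp, fun i hi => absurd hi i.1.not_lt_zero⟩
  | succ n ih =>
    obtain ⟨p, hp, hfix⟩ := ih
    by_cases hn : n < m
    swap
    · exact ⟨p, hp, fun i hi => hfix i (by omega)⟩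
    set i : Fin m := ⟨n, hn⟩
    have hP : 1 / 3 ≤ prOf (massP p) (fun ω => freeAt ends ω i) :=
      one_third_le_prOf_freeAt ends x hx0 hxv hp i fun j hj => hfix j hj
    have hxi : x i ≤ 1 :=
      (single_le_sum (fun j _ => hx0 j) (mem_filter.2 ⟨mem_univ i, Or.inl rfl⟩)).trans
        (hxv (ends i).1)
    refine ⟨Function.update p i (x i / 3 / prOf (massP p) (fun ω => freeAt ends ω i)),
      fun j => ?_, fun j hj => ?_⟩
    · rcases eq_or_ne j i with rfl | hji
      · rw [Function.update_self]
        exact ⟨by positivity [hx0 i], by rw [div_le_one (by linarith)]; linarith⟩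
      · rw [Function.update_of_ne hji]
        exact hp j
    · have hji : j ≤ i := Fin.le_def.2 (Nat.lt_succ_iff.1 hj)
      unfold fixedPt
      rw [prOf_massP_update_of_indep p _ fun ω b => freeAt_update_of_le ends ω hji b]
      rcases eq_or_ne j i with rfl | hji
      · rw [Function.update_self]
        field_simp
      · rw [Function.update_of_ne hji]
        have hjn : j.1 ≠ n := Fin.val_ne_of_ne hji
        exact hfix j (by omega)

end OCRS

open Classical in
theorem warmup_third_OCRS_general {V : Type*} {m : ℕ}
    (ends : Fin m → V × V)
    (x : Fin m → ℝ)
    (hx0 : ∀ i, 0 ≤ x i)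
    (hxv : ∀ v : V,
      ∑ i ∈ Finset.univ.filter (fun i => touches (ends i) v), x i ≤ 1) :
    (∀ p : Fin m → ℝ, (∀ i, 0 ≤ p i ∧ p i ≤ 1) →
      ∀ e : Fin m, (∀ j : Fin m, j < e → fixedPt ends x p (1 / 3) j) →
        prOf (massP p) (fun ω => freeAt ends ω e) ≥ 1 / 3) ∧
    (∃ p : Fin m → ℝ, (∀ i, 0 ≤ p i ∧ p i ≤ 1) ∧
      ∀ e : Fin m, fixedPt ends x p (1 / 3) e ∧
        prOf (massP p) (fun ω => matchedEdge ends ω e) = x e / 3) ∧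
    (∀ ω : Fin m → Bool, ∀ i ∈ greedyUpTo ends ω m, ∀ j ∈ greedyUpTo ends ω m,
      i ≠ j → ¬ touches (ends j) (ends i).1 ∧ ¬ touches (ends j) (ends i).2) := by
  refine ⟨fun p hp e hfix => one_third_le_prOf_freeAt ends x hx0 hxv hp e hfix, ?_,
    fun ω _ hi _ hj hij => greedyUpTo_pairwise ends ω m hi hj hij⟩
  obtain ⟨p, hp, hfix⟩ := exists_fixedPt_third_of_lt ends x hx0 hxv m
  refine ⟨p, hp, fun e => ⟨hfix e e.isLt, ?_⟩⟩
  calc prOf (massP p) (fun ω => matchedEdge ends ω e)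
      = p e * prOf (massP p) (fun ω => freeAt ends ω e) := prOf_mem_greedyUpTo ends p e.isLt
    _ = 1 / 3 * x e := hfix e e.isLt
    _ = x e / 3 := by ring

open Classical in
/-- Warm-up `1/3`-OCRS for matching with edge arrival:
for a finite simple graph (edges `ends : Fin m → V × V`, pairwise distinct as unordered
pairs) and `x` in the fractional matching polytope:
(1) for any activation probabilities `p : E → [0,1]`, if `p` satisfies the
`(1/3)`-fixed-point condition at every edge preceding `e`, then `P(F_e) ≥ 1/3`;
(2) consequently, there exists `p : E → [0,1]` satisfying the `(1/3)`-fixed-point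
condition at every edge, so that every edge `e` is matched with probability exactly
`x e / 3`; and (3) the greedy process always outputs a matching. -/
theorem warmup_third_OCRS {V : Type*} {m : ℕ}
    (ends : Fin m → V × V)
    (hsimple : ∀ i, (ends i).1 ≠ (ends i).2)
    (hdist : ∀ i j : Fin m, i ≠ j →
      ¬(((ends i).1 = (ends j).1 ∧ (ends i).2 = (ends j).2) ∨
        ((ends i).1 = (ends j).2 ∧ (ends i).2 = (ends j).1)))
    (x : Fin m → ℝ)
    (hx0 : ∀ i, 0 ≤ x i)
    (hxv : ∀ v : V,
      ∑ i ∈ Finset.univ.filter (fun i => touches (ends i) v), x i ≤ 1) :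
    (∀ p : Fin m → ℝ, (∀ i, 0 ≤ p i ∧ p i ≤ 1) →
      ∀ e : Fin m, (∀ j : Fin m, j < e → fixedPt ends x p (1 / 3) j) →
        prOf (massP p) (fun ω => freeAt ends ω e) ≥ 1 / 3) ∧
    (∃ p : Fin m → ℝ, (∀ i, 0 ≤ p i ∧ p i ≤ 1) ∧
      ∀ e : Fin m, fixedPt ends x p (1 / 3) e ∧
        prOf (massP p) (fun ω => matchedEdge ends ω e) = x e / 3) ∧
    (∀ ω : Fin m → Bool, ∀ i ∈ greedyUpTo ends ω m, ∀ j ∈ greedyUpTo ends ω m,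
      i ≠ j → ¬ touches (ends j) (ends i).1 ∧ ¬ touches (ends j) (ends i).2) :=
  warmup_third_OCRS_general ends x hx0 hxv
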